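/- arXiv:1201.0469 — 7 statements merged into one kernel-verified Lean document; each statement's English description precedes it below -/
import Mathlib

section
/- Let H be a real m × n matrix and suppose the network is observable, i.e., the kernel of H is exactly the span of the all-ones vector 𝟙 (Hθ = 0 iff θ is a constant vector). Then for every index set I ⊆ {1,…,m} and every column index j₀, the submatrix H(Ī, j̄₀) (rows in the complement Ī of I, all columns except j₀) has rank strictly less than n − 1 if and only if there exists θ ∈ ℝⁿ with Hθ ≠ 0 and (Hθ)_j = 0 for every j ∉ I. -/
open Module

lemma rank_lt_iff_aux {k l : Type*} [Fintype k] [Fintype l] (M : Matrix k l ℝ) :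
    M.rank < Fintype.card l ↔ ∃ v : l → ℝ, v ≠ 0 ∧ M.mulVec v = 0 := by
  have hrn := M.mulVecLin.finrank_range_add_finrank_ker
  rw [Module.finrank_pi] at hrn
  rw [Matrix.rank]
  constructor
  · intro h
    have hk : LinearMap.ker M.mulVecLin ≠ ⊥ := fun hb => by
      rw [hb, finrank_bot] at hrn; omega
    obtain ⟨v, hv, hv0⟩ := Submodule.exists_mem_ne_zero_of_ne_bot hk
    exact ⟨v, hv0, hv⟩
  · rintro ⟨v, hv0, hv⟩
    have hpos : 0 < finrank ℝ (LinearMap.ker M.mulVecLin) :=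
      Module.finrank_pos_iff.mpr ⟨⟨⟨v, hv⟩, 0, fun h => hv0 (by simpa [Subtype.ext_iff] using h)⟩⟩
    omega

/-- For an observable network (kernel of `H` is exactly the span of the
all-ones vector), an index set `I` together with any reference column `j₀` satisfies the
rank-deficiency condition `rank (H(Ī, j̄₀)) < n - 1` iff there is a state `θ` with
`Hθ ≠ 0` whose residual `Hθ` vanishes outside `I`. -/
theorem stmt0 (m n : ℕ) (H : Matrix (Fin m) (Fin n) ℝ)
    (hobs : ∀ θ : Fin n → ℝ, H.mulVec θ = 0 ↔ ∃ c : ℝ, θ = fun _ => c)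
    (I : Set (Fin m)) (j₀ : Fin n) :
    (H.submatrix (fun r : {j : Fin m // j ∉ I} => r.1)
        (fun c : {l : Fin n // l ≠ j₀} => c.1)).rank < n - 1 ↔
      ∃ θ : Fin n → ℝ, H.mulVec θ ≠ 0 ∧ ∀ j, j ∉ I → H.mulVec θ j = 0 := by
  classical
  set M := H.submatrix (fun r : {j : Fin m // j ∉ I} => r.1)
      (fun c : {l : Fin n // l ≠ j₀} => c.1) with hM
  have hcard : Fintype.card {l : Fin n // l ≠ j₀} = n - 1 := by
    simp [Fintype.card_subtype_compl ((· = j₀))]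
  have key : ∀ (θ : Fin n → ℝ), θ j₀ = 0 → ∀ (j : Fin m) (hj : j ∉ I),
      M.mulVec (fun c => θ c.1) ⟨j, hj⟩ = H.mulVec θ j := by
    intro θ hθ j hj
    simp only [hM, Matrix.mulVec, dotProduct, Matrix.submatrix_apply]
    have h1 : ∑ i : Fin n, H j i * θ i = ∑ i ∈ Finset.univ.erase j₀, H j i * θ i :=
      (Finset.sum_erase _ (by simp [hθ])).symm
    rw [h1, Finset.sum_subtype (p := fun l => l ≠ j₀) _ (fun l => by simp) (fun l => H j l * θ l)]
  rw [← hcard, rank_lt_iff_aux]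
  constructor
  · rintro ⟨v, hv0, hv⟩
    refine ⟨fun l => if h : l = j₀ then 0 else v ⟨l, h⟩, ?_, ?_⟩
    · intro hc
      rw [hobs] at hc
      obtain ⟨c, hc⟩ := hc
      have hc0 : c = 0 := by simpa using (congrFun hc j₀).symm
      apply hv0
      funext x
      have hx := congrFun hc x.1
      rw [dif_neg x.2, hc0] at hx
      simpa using hx
    · intro j hj
      have hθ0 : (fun l => if h : l = j₀ then 0 else v ⟨l, h⟩) j₀ = (0:ℝ) := by simp
      rw [← key _ hθ0 j hj]
      have heq : (fun c : {l : Fin n // l ≠ j₀} =>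
          if h : c.1 = j₀ then 0 else v ⟨c.1, h⟩) = v := by
        funext c; rw [dif_neg c.2]
      rw [heq, hv]
      rfl
  · rintro ⟨θ, hθ, hzero⟩
    have h1 : H.mulVec (fun _ => θ j₀) = 0 := (hobs _).mpr ⟨θ j₀, rfl⟩
    set θ' : Fin n → ℝ := fun l => θ l - θ j₀ with hθ'
    have hHθ' : H.mulVec θ' = H.mulVec θ := by
      have h2 : θ' = θ - (fun _ => θ j₀) := rfl
      rw [h2, Matrix.mulVec_sub, h1, sub_zero]
    refine ⟨fun c => θ' c.1, ?_, ?_⟩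
    · intro h0
      have hθ'0 : θ' = 0 := by
        funext l
        by_cases hl : l = j₀
        · subst hl; simp [hθ']
        · exact congrFun h0 ⟨l, hl⟩
      exact hθ (by rw [← hHθ', hθ'0, Matrix.mulVec_zero])
    · funext r
      obtain ⟨j, hj⟩ := r
      rw [key θ' (by simp [hθ']) j hj, hHθ']
      exact hzero j hj
end

section
/- Let H be a real m × n matrix whose kernel is exactly the span of the all-ones vector 𝟙, and let i be a row index with H(i,:) ≠ 0. Call I ⊆ {1,…,m} a critical tuple if rank(H(Ī, j̄₀)) < n − 1 for some (equivalently any) column index j₀, and no strictly proper subset I' ⊊ I satisfies rank(H(Ī', j̄₀)) < n − 1. Then the minimum of card(Hθ) over all θ ∈ ℝⁿ with (Hθ)_i = 1 is equal to the minimum of card(I) over all critical tuples I containing i; in particular both minima exist. -/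
open Matrix

/-- The support of the residual vector `Hθ`: the set of measurements with nonzero value. -/
noncomputable def resid {m n : ℕ} (H : Matrix (Fin m) (Fin n) ℝ) (θ : Fin n → ℝ) :
    Finset (Fin m) := Finset.univ.filter fun j => H.mulVec θ j ≠ 0

/-- The submatrix `H(Ī, j̄₀)` of `H`: rows in the complement of `I`, all columns except `j₀`. -/
def subm {m n : ℕ} (H : Matrix (Fin m) (Fin n) ℝ) (I : Finset (Fin m)) (j₀ : Fin n) :
    Matrix {j : Fin m // j ∉ I} {l : Fin n // l ≠ j₀} ℝ := fun r c => H r.1 c.1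

/-- Removing the measurements in `I` renders the network unobservable:
`rank (H(Ī, j̄₀)) < n - 1` for some reference column `j₀`. -/
noncomputable def Deficient {m n : ℕ} (H : Matrix (Fin m) (Fin n) ℝ)
    (I : Finset (Fin m)) : Prop := ∃ j₀ : Fin n, (subm H I j₀).rank < n - 1

/-- `I` is a critical tuple: removing it renders the network unobservable, and no strictly
proper subset does so. -/
noncomputable def CriticalTuple {m n : ℕ} (H : Matrix (Fin m) (Fin n) ℝ)
    (I : Finset (Fin m)) : Prop := Deficient H I ∧ ∀ I' ⊂ I, ¬ Deficient H I'

lemma rank_lt_iff {α β : Type*} [Fintype α] [Fintype β] (A : Matrix α β ℝ) :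
    A.rank < Fintype.card β ↔ ∃ x : β → ℝ, x ≠ 0 ∧ A.mulVec x = 0 := by
  have hrn := LinearMap.finrank_range_add_finrank_ker A.mulVecLin
  rw [Module.finrank_pi] at hrn
  rw [Matrix.rank]
  constructor
  · intro h
    have hk : 0 < Module.finrank ℝ (LinearMap.ker A.mulVecLin) := by omega
    rw [Module.finrank_pos_iff] at hk
    obtain ⟨⟨x, hx⟩, hne⟩ := exists_ne (0 : LinearMap.ker A.mulVecLin)
    refine ⟨x, ?_, hx⟩
    simpa [Subtype.ext_iff] using hne
  · rintro ⟨x, hx0, hx⟩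
    have hk : 0 < Module.finrank ℝ (LinearMap.ker A.mulVecLin) := by
      rw [Module.finrank_pos_iff]
      exact nontrivial_of_ne ⟨x, hx⟩ 0 (by simp [Subtype.ext_iff, hx0])
    omega

lemma card_ne (n : ℕ) (j₀ : Fin n) : Fintype.card {l : Fin n // l ≠ j₀} = n - 1 := by
  simp [Fintype.card_subtype_compl]

lemma subm_mulVec {m n : ℕ} (H : Matrix (Fin m) (Fin n) ℝ) (I : Finset (Fin m)) (j₀ : Fin n)
    (θ : Fin n → ℝ) (hθ0 : θ j₀ = 0) (j : Fin m) (hj : j ∉ I) :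
    (subm H I j₀).mulVec (fun l => θ l.1) ⟨j, hj⟩ = H.mulVec θ j := by
  simp only [Matrix.mulVec, dotProduct, subm]
  rw [← Finset.sum_subtype (Finset.univ.erase j₀)
    (p := fun l : Fin n => l ≠ j₀) (by simp) (fun l => H j l * θ l)]
  rw [Finset.sum_erase_eq_sub (Finset.mem_univ j₀)]
  simp [hθ0, subm]

lemma deficient_iff {m n : ℕ} (H : Matrix (Fin m) (Fin n) ℝ)
    (hobs : ∀ θ : Fin n → ℝ, H.mulVec θ = 0 ↔ ∃ c : ℝ, θ = fun _ => c)
    (hn : 0 < n) (I : Finset (Fin m)) :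
    Deficient H I ↔ ∃ θ : Fin n → ℝ, H.mulVec θ ≠ 0 ∧ resid H θ ⊆ I := by
  constructor
  · rintro ⟨j₀, hrank⟩
    rw [← card_ne n j₀, rank_lt_iff] at hrank
    obtain ⟨x, hx0, hx⟩ := hrank
    classical
    set θ : Fin n → ℝ := fun l => if h : l = j₀ then 0 else x ⟨l, h⟩ with hθdef
    have hθ0 : θ j₀ = 0 := by simp [hθdef]
    have hzero : ∀ j ∉ I, H.mulVec θ j = 0 := by
      intro j hj
      rw [← subm_mulVec H I j₀ θ hθ0 j hj]
      have : (fun l : {l : Fin n // l ≠ j₀} => θ l.1) = x := by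
        funext l; simp [hθdef, l.2]
      rw [this, hx]; rfl
    refine ⟨θ, ?_, ?_⟩
    · intro hcon
      rw [hobs] at hcon
      obtain ⟨c, hc⟩ := hcon
      have hc0 : c = 0 := by rw [hc] at hθ0; simpa using hθ0
      apply hx0
      funext l
      have := congrFun hc l.1
      simp only [hθdef, dif_neg l.2] at this
      simp [this, hc0]
    · intro j hj
      simp only [resid, Finset.mem_filter] at hj
      by_contra hjI
      exact hj.2 (hzero j hjI)
  · rintro ⟨θ, hθ, hsub⟩
    classical
    refine ⟨⟨0, hn⟩, ?_⟩
    set j₀ : Fin n := ⟨0, hn⟩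
    set θ' : Fin n → ℝ := fun l => θ l - θ j₀ with hθ'def
    have hone : H.mulVec (fun _ => θ j₀) = 0 := (hobs _).mpr ⟨θ j₀, rfl⟩
    have hHθ' : H.mulVec θ' = H.mulVec θ := by
      have : θ' = θ - (fun _ => θ j₀) := by funext l; simp [hθ'def]
      rw [this, Matrix.mulVec_sub, hone, sub_zero]
    rw [← card_ne n j₀, rank_lt_iff]
    refine ⟨fun l => θ' l.1, ?_, ?_⟩
    · intro hx0
      apply hθ
      rw [← hHθ']
      rw [hobs]
      refine ⟨0, funext fun l => ?_⟩
      by_cases h : l = j₀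
      · simp [hθ'def, h]
      · exact congrFun hx0 ⟨l, h⟩
    · funext r
      obtain ⟨j, hj⟩ := r
      rw [subm_mulVec H I j₀ θ' (by simp [hθ'def]) j hj, hHθ']
      show H.mulVec θ j = 0
      by_contra hne
      exact hj (hsub (by simp [resid, hne]))

lemma exists_minimal_subset {α : Type*} [DecidableEq α] (P : Finset α → Prop) :
    ∀ I₀ : Finset α, P I₀ → ∃ I, I ⊆ I₀ ∧ P I ∧ ∀ I' ⊂ I, ¬ P I' := by
  intro I₀
  induction I₀ using Finset.strongInductionOn with
  | _ I₀ ih =>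
    intro h
    by_cases hc : ∃ I' ⊂ I₀, P I'
    · obtain ⟨I', hI', hP⟩ := hc
      obtain ⟨I, hsub, hPI, hmin⟩ := ih I' hI' hP
      exact ⟨I, hsub.trans hI'.subset, hPI, hmin⟩
    · push_neg at hc
      exact ⟨I₀, subset_rfl, h, hc⟩

/-- For an observable network and a nonzero row `i`, the minimum of
`card (Hθ)` over `θ` with `(Hθ)_i = 1` equals the minimum of `card I` over all critical
tuples `I` containing `i`; in particular both minima exist. -/
theorem stmt3 (m n : ℕ) (H : Matrix (Fin m) (Fin n) ℝ)
    (hobs : ∀ θ : Fin n → ℝ, H.mulVec θ = 0 ↔ ∃ c : ℝ, θ = fun _ => c)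
    (i : Fin m) (hrow : H i ≠ 0) :
    ∃ k : ℕ,
      IsLeast {c : ℕ | ∃ θ : Fin n → ℝ, H.mulVec θ i = 1 ∧ (resid H θ).card = c} k ∧
      IsLeast {c : ℕ | ∃ I : Finset (Fin m), CriticalTuple H I ∧ i ∈ I ∧ I.card = c} k := by
  classical
  have hn : 0 < n := by
    rcases Nat.eq_zero_or_pos n with h | h
    · exfalso; apply hrow; subst h; funext l; exact absurd l.2 (by omega)
    · exact h
  set A : Set ℕ :=
    {c : ℕ | ∃ θ : Fin n → ℝ, H.mulVec θ i = 1 ∧ (resid H θ).card = c} with hA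
  -- A is nonempty
  obtain ⟨l₀, hl₀⟩ : ∃ l, H i l ≠ 0 := by
    by_contra h
    push_neg at h
    exact hrow (funext h)
  have hAne : A.Nonempty := by
    set θ₀ : Fin n → ℝ := fun l => if l = l₀ then (H i l₀)⁻¹ else 0 with hθ₀
    refine ⟨(resid H θ₀).card, θ₀, ?_, rfl⟩
    rw [Matrix.mulVec, dotProduct]
    rw [Finset.sum_eq_single l₀ (by intro b _ hb; simp [hθ₀, hb]) (by simp)]
    simp [hθ₀, hl₀]
  set k := sInf A with hk
  have hkA : k ∈ A := Nat.sInf_mem hAne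
  have hklb : ∀ c ∈ A, k ≤ c := fun c hc => Nat.sInf_le hc
  obtain ⟨θs, hθs1, hθscard⟩ := hkA
  have hθsne : H.mulVec θs ≠ 0 := by
    intro h
    rw [h] at hθs1
    simp at hθs1
  -- lower bound for critical tuples containing i
  have hBlb : ∀ I : Finset (Fin m), CriticalTuple H I → i ∈ I → k ≤ I.card := by
    intro I hI hiI
    obtain ⟨hdef, hmin⟩ := hI
    obtain ⟨θ, hθne, hθsub⟩ := (deficient_iff H hobs hn I).mp hdef
    have hθi : H.mulVec θ i ≠ 0 := by
      intro h0
      apply hmin (I.erase i) (Finset.erase_ssubset hiI)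
      rw [deficient_iff H hobs hn]
      refine ⟨θ, hθne, fun j hj => Finset.mem_erase.mpr ⟨?_, hθsub hj⟩⟩
      intro hji
      subst hji
      exact (Finset.mem_filter.mp hj).2 h0
    set θ' : Fin n → ℝ := (H.mulVec θ i)⁻¹ • θ with hθ'
    have hres : resid H θ' = resid H θ := by
      ext j
      simp only [resid, Finset.mem_filter, Finset.mem_univ, true_and, hθ',
        Matrix.mulVec_smul]
      simp [smul_eq_mul, inv_ne_zero hθi, hθi]
    have hmem : (resid H θ').card ∈ A := by
      refine ⟨θ', ?_, rfl⟩
      rw [hθ', Matrix.mulVec_smul]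
      simp [smul_eq_mul, inv_mul_cancel₀ hθi]
    calc k ≤ (resid H θ').card := hklb _ hmem
    _ ≤ I.card := Finset.card_le_card (hres ▸ hθsub)
  -- construct a critical tuple inside resid θs
  have hdefIs : Deficient H (resid H θs) :=
    (deficient_iff H hobs hn _).mpr ⟨θs, hθsne, subset_rfl⟩
  obtain ⟨I, hIsub, hIdef, hImin⟩ :=
    exists_minimal_subset (Deficient H) (resid H θs) hdefIs
  have hcrit : CriticalTuple H I := ⟨hIdef, hImin⟩
  -- i ∈ I
  have hiI : i ∈ I := by
    by_contra hiI
    obtain ⟨θ, hθne, hθsub⟩ := (deficient_iff H hobs hn I).mp hIdef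
    obtain ⟨j, hj⟩ : ∃ j, H.mulVec θ j ≠ 0 := by
      by_contra h
      push_neg at h
      exact hθne (funext h)
    have hjres : j ∈ resid H θs := hIsub (hθsub (by simp [resid, hj]))
    set t : ℝ := H.mulVec θs j / H.mulVec θ j with ht
    set θ' : Fin n → ℝ := θs - t • θ with hθ'
    have hmv : H.mulVec θ' = H.mulVec θs - t • H.mulVec θ := by
      rw [hθ', Matrix.mulVec_sub, Matrix.mulVec_smul]
    have hθ'i : H.mulVec θ' i = 1 := by
      have hθi0 : H.mulVec θ i = 0 := by
        by_contra h
        exact hiI (hθsub (by simp [resid, h]))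
      rw [hmv]
      simp [hθs1, hθi0]
    have hθ'j : H.mulVec θ' j = 0 := by
      rw [hmv]
      simp [ht, div_mul_cancel₀ _ hj]
    have hsub' : resid H θ' ⊆ (resid H θs).erase j := by
      intro l hl
      simp only [resid, Finset.mem_filter, Finset.mem_univ, true_and] at hl
      refine Finset.mem_erase.mpr ⟨?_, ?_⟩
      · intro hlj; subst hlj; exact hl hθ'j
      · by_contra hls
        simp only [resid, Finset.mem_filter, Finset.mem_univ, true_and,
          not_not] at hls
        apply hl
        have hlθ : H.mulVec θ l = 0 := by
          by_contra h
          have : l ∈ resid H θs := hIsub (hθsub (by simp [resid, h]))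
          simp [resid, hls] at this
        rw [hmv]
        simp [hls, hlθ]
    have hlt : (resid H θ').card < k := by
      calc (resid H θ').card ≤ ((resid H θs).erase j).card := Finset.card_le_card hsub'
      _ = (resid H θs).card - 1 := Finset.card_erase_of_mem hjres
      _ < k := by
          rw [hθscard]
          have hkpos : 0 < k := by
            rw [← hθscard]
            exact Finset.card_pos.mpr ⟨j, hjres⟩
          omega
    exact absurd (hklb _ ⟨θ', hθ'i, rfl⟩) (not_le.mpr hlt)
  -- conclude
  have hcardI : I.card = k := by
    have h1 : k ≤ I.card := hBlb I hcrit hiI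
    have h2 : I.card ≤ k := hθscard ▸ Finset.card_le_card hIsub
    omega
  refine ⟨k, ⟨⟨θs, hθs1, hθscard⟩, fun c hc => hklb c hc⟩,
    ⟨⟨I, hcrit, hiI, hcardI⟩, ?_⟩⟩
  rintro c ⟨I', hcrit', hiI', hcard'⟩
  exact hcard' ▸ hBlb I' hcrit' hiI'
end

section
/- Let H be a real m × n matrix and i a row index. If θ* minimizes card(Hθ) over all θ ∈ ℝⁿ with (Hθ)_i = 1, then there is no θ ∈ ℝⁿ with Hθ ≠ 0 and supp(Hθ) strictly contained in supp(Hθ*). In other words, the support of an optimal solution of problem (2) is minimal among all nonzero residual supports, so the corresponding measurement set contains no strictly proper subset whose removal renders the network unobservable. -/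
open Matrix

/-- If `θ*` minimizes `card (Hθ)` subject to `(Hθ)_i = 1`, then no `θ` with
`Hθ ≠ 0` has residual support strictly contained in `supp (Hθ*)`: the support of an
optimal solution of problem (2) is minimal among all nonzero residual supports. -/
theorem stmt6 (m n : ℕ) (H : Matrix (Fin m) (Fin n) ℝ) (i : Fin m)
    (θs : Fin n → ℝ)
    (hfeas : H.mulVec θs i = 1)
    (hopt : ∀ θ : Fin n → ℝ, H.mulVec θ i = 1 → (resid H θs).card ≤ (resid H θ).card) :
    ¬ ∃ θ : Fin n → ℝ, H.mulVec θ ≠ 0 ∧ resid H θ ⊂ resid H θs := by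
  rintro ⟨θ, hne, hsub⟩
  have hmem : ∀ (φ : Fin n → ℝ) k, k ∈ resid H φ ↔ H.mulVec φ k ≠ 0 := by
    intro φ k; simp [resid]
  by_cases hi : H.mulVec θ i = 0
  · -- i not in supp(Hθ): cancel a coordinate of θs
    obtain ⟨j, hj⟩ : ∃ j, H.mulVec θ j ≠ 0 := by
      by_contra h
      push_neg at h
      exact hne (funext h)
    set t := H.mulVec θs j / H.mulVec θ j with ht
    set θ' := θs - t • θ with hθ'
    have hmv : ∀ k, H.mulVec θ' k = H.mulVec θs k - t * H.mulVec θ k := by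
      intro k
      simp [hθ', Matrix.mulVec_sub, Matrix.mulVec_smul, smul_eq_mul]
    have hfeas' : H.mulVec θ' i = 1 := by
      rw [hmv, hi, hfeas]; ring
    have hj0 : H.mulVec θ' j = 0 := by
      rw [hmv, ht, div_mul_cancel₀ _ hj]; ring
    have hjs : j ∈ resid H θs := hsub.1 ((hmem θ j).2 hj)
    have hss : resid H θ' ⊂ resid H θs := by
      constructor
      · intro k hk
        have hk' := (hmem θ' k).1 hk
        rw [hmv] at hk'
        by_cases h1 : H.mulVec θ k = 0
        · apply (hmem θs k).2
          intro h2; rw [h1, h2] at hk'; simp at hk'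
        · exact hsub.1 ((hmem θ k).2 h1)
      · intro h
        have := h hjs
        rw [hmem] at this
        exact this hj0
    have := hopt θ' hfeas'
    have := Finset.card_lt_card hss
    omega
  · -- i in supp(Hθ): rescale θ
    set θ' := (H.mulVec θ i)⁻¹ • θ with hθ'
    have hmv : ∀ k, H.mulVec θ' k = (H.mulVec θ i)⁻¹ * H.mulVec θ k := by
      intro k; simp [hθ', Matrix.mulVec_smul, smul_eq_mul]
    have hfeas' : H.mulVec θ' i = 1 := by
      rw [hmv, inv_mul_cancel₀ hi]
    have hres : resid H θ' = resid H θ := by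
      ext k
      rw [hmem, hmem, hmv]
      simp [hi]
    have := hopt θ' hfeas'
    rw [hres] at this
    have := Finset.card_lt_card hsub
    omega
end

section
/- Let G be a simple graph on vertex set V = {1,…,n} with symmetric susceptances b(u,v) = b(v,u) for adjacent u,v, let S ⊆ V be nonempty and proper, and let A be the set of edges cut by S. Let M be any real matrix with n columns, each of whose rows is either a line power-flow measurement row (θ ↦ b(u,v)(θ_u − θ_v)) for an edge {u,v} ∉ A, or a bus injection measurement row (θ ↦ Σ_{u adjacent to v} b(v,u)(θ_v − θ_u)) for a vertex v not incident to any edge of A. Then for every column index j₀, the matrix obtained from M by deleting column j₀ has rank strictly less than n − 1. In particular, removing all line power-flow measurements on A and all injection measurements at buses connected by edges of A renders the network unobservable. -/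
open Finset Matrix

/-!
Every admissible measurement row annihilates every vector that is constant on `S` and on its
complement: a flow row on an uncut edge sees equal values at both ends, and the injection row
at `x` is the sum of the flow rows on the edges at `x`, none of which is cut. The indicator of
the side of the cut not containing `j₀` is such a vector; it vanishes at `j₀`, and it is nonzero
because `S` is nonempty and proper. Restricted to the columns other than `j₀` it is therefore a
nonzero kernel vector of the reduced matrix, whose rank thus falls below `n - 1`.
-/

/-- The row of the measurement matrix corresponding to the line power-flow measurement
`θ ↦ b u v * (θ u - θ v)` on the edge `{u, v}`. -/
def flowRow (n : ℕ) (b : Fin n → Fin n → ℝ) (u v : Fin n) : Fin n → ℝ :=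
  fun x => if x = u then b u v else if x = v then -(b u v) else 0

/-- The row of the measurement matrix corresponding to the bus injection measurement
`θ ↦ ∑_{u adjacent to x} b x u * (θ x - θ u)` at bus `x`. -/
def injRow (n : ℕ) (G : SimpleGraph (Fin n)) [DecidableRel G.Adj]
    (b : Fin n → Fin n → ℝ) (x : Fin n) : Fin n → ℝ :=
  fun y => if y = x then ∑ u ∈ Finset.univ.filter (fun u => G.Adj x u), b x u
           else if G.Adj x y then -(b x y) else 0

theorem Matrix.rank_lt_card_width_of_mulVec_eq_zero {m n R : Type*} [Fintype n] [Field R]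
    {A : Matrix m n R} {w : n → R} (hw : w ≠ 0) (hA : A *ᵥ w = 0) :
    A.rank < Fintype.card n := by
  have hker : 0 < Module.finrank R (LinearMap.ker A.mulVecLin) :=
    Module.finrank_pos_iff_exists_ne_zero.mpr
      ⟨⟨w, by rw [LinearMap.mem_ker, mulVecLin_apply, hA]⟩, by simpa using hw⟩
  have := LinearMap.finrank_range_add_finrank_ker A.mulVecLin
  rw [Module.finrank_fintype_fun_eq_card] at this
  exact (Nat.lt_add_of_pos_right hker).trans_eq this

theorem Matrix.submatrix_subtype_ne_mulVec_of_eq_zero {m n R : Type*} [Fintype n] [DecidableEq n]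
    [CommSemiring R] (A : Matrix m n R) {w : n → R} {j₀ : n} (hw : w j₀ = 0) :
    A.submatrix id (fun c : {l : n // l ≠ j₀} => c.1) *ᵥ (fun c => w c.1) = A *ᵥ w := by
  funext r
  simp only [mulVec, dotProduct, submatrix_apply, id_eq]
  rw [← Finset.sum_erase (f := fun l => A r l * w l) (a := j₀) univ (by rw [hw, mul_zero]),
    Finset.sum_subtype (p := (· ≠ j₀)) (univ.erase j₀) (by simp)]

section

variable {n : ℕ}

theorem flowRow_dotProduct_eq_zero (b : Fin n → Fin n → ℝ) {u v : Fin n} (huv : u ≠ v)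
    {w : Fin n → ℝ} (hw : w u = w v) : flowRow n b u v ⬝ᵥ w = 0 := by
  rw [dotProduct, Fintype.sum_eq_add u v huv (fun x hx => by simp [flowRow, hx.1, hx.2])]
  simp [flowRow, huv.symm, hw]

theorem injRow_eq_sum_flowRow (G : SimpleGraph (Fin n)) [DecidableRel G.Adj]
    (b : Fin n → Fin n → ℝ) (x : Fin n) :
    injRow n G b x = ∑ u ∈ univ.filter (G.Adj x), flowRow n b x u := by
  funext y
  rw [Finset.sum_apply]
  by_cases hy : y = x
  · subst hy
    simp [injRow, flowRow]
  · simp [injRow, flowRow, hy, Finset.sum_ite_eq]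

theorem injRow_dotProduct_eq_zero (G : SimpleGraph (Fin n)) [DecidableRel G.Adj]
    (b : Fin n → Fin n → ℝ) {x : Fin n} {w : Fin n → ℝ}
    (hw : ∀ u, G.Adj x u → w x = w u) : injRow n G b x ⬝ᵥ w = 0 := by
  rw [injRow_eq_sum_flowRow, sum_dotProduct]
  refine Finset.sum_eq_zero fun u hu => ?_
  have hxu : G.Adj x u := (mem_filter.mp hu).2
  exact flowRow_dotProduct_eq_zero b hxu.ne (hw u hxu)

def IsMeasurementRowOffCut (G : SimpleGraph (Fin n)) [DecidableRel G.Adj]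
    (b : Fin n → Fin n → ℝ) (S : Finset (Fin n)) (row : Fin n → ℝ) : Prop :=
  (∃ u v : Fin n, G.Adj u v ∧ ((u ∈ S) ↔ (v ∈ S)) ∧ row = flowRow n b u v) ∨
    (∃ x : Fin n, (∀ u : Fin n, G.Adj x u → ((x ∈ S) ↔ (u ∈ S))) ∧
      row = injRow n G b x)

theorem IsMeasurementRowOffCut.dotProduct_eq_zero {G : SimpleGraph (Fin n)}
    [DecidableRel G.Adj] {b : Fin n → Fin n → ℝ} {S : Finset (Fin n)} {row : Fin n → ℝ}
    (hrow : IsMeasurementRowOffCut G b S row) {w : Fin n → ℝ}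
    (hw : ∀ u v, (u ∈ S ↔ v ∈ S) → w u = w v) : row ⬝ᵥ w = 0 := by
  rcases hrow with ⟨u, v, huv, huvS, rfl⟩ | ⟨x, hx, rfl⟩
  · exact flowRow_dotProduct_eq_zero b huv.ne (hw u v huvS)
  · exact injRow_dotProduct_eq_zero G b fun u hu => hw x u (hx u hu)

end

def farSideIndicator {α : Type*} [DecidableEq α] (S : Finset α) (j₀ : α) : α → ℝ :=
  fun x => if (x ∈ S ↔ j₀ ∈ S) then 0 else 1

theorem farSideIndicator_eq_of_iff {α : Type*} [DecidableEq α] {S : Finset α} {j₀ u v : α}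
    (h : u ∈ S ↔ v ∈ S) : farSideIndicator S j₀ u = farSideIndicator S j₀ v := by
  simp only [farSideIndicator, h]

theorem Finset.exists_on_other_side {α : Type*} [Fintype α] {S : Finset α} (hS : S.Nonempty)
    (hS' : S ≠ univ) (j₀ : α) : ∃ x, ¬(x ∈ S ↔ j₀ ∈ S) := by
  by_cases hj : j₀ ∈ S
  · obtain ⟨x, hx⟩ := not_forall.mp (mt eq_univ_of_forall hS')
    exact ⟨x, by simp [hj, hx]⟩
  · obtain ⟨x, hx⟩ := hS
    exact ⟨x, by simp [hj, hx]⟩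

theorem stmt9_general (m n : ℕ) (G : SimpleGraph (Fin n)) [DecidableRel G.Adj]
    (b : Fin n → Fin n → ℝ)
    (S : Finset (Fin n)) (hS1 : S.Nonempty) (hS2 : S ≠ Finset.univ)
    (M : Matrix (Fin m) (Fin n) ℝ)
    (hrows : ∀ r : Fin m,
      (∃ u v : Fin n, G.Adj u v ∧ ((u ∈ S) ↔ (v ∈ S)) ∧ M r = flowRow n b u v) ∨
      (∃ x : Fin n, (∀ u : Fin n, G.Adj x u → ((x ∈ S) ↔ (u ∈ S))) ∧
        M r = injRow n G b x)) :
    ∀ j₀ : Fin n,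
      (M.submatrix (id : Fin m → Fin m) (fun c : {l : Fin n // l ≠ j₀} => c.1)).rank
        < n - 1 := by
  intro j₀
  set w := farSideIndicator S j₀
  have hMw : M *ᵥ w = 0 := funext fun r =>
    IsMeasurementRowOffCut.dotProduct_eq_zero (hrows r) fun _ _ => farSideIndicator_eq_of_iff
  have hwj₀ : w j₀ = 0 := by simp [w, farSideIndicator]
  obtain ⟨x, hx⟩ := S.exists_on_other_side hS1 hS2 j₀
  have hw' : (fun c : {l : Fin n // l ≠ j₀} => w c.1) ≠ 0 := fun h => by
    have := congrFun h ⟨x, by rintro rfl; exact hx Iff.rfl⟩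
    simp [w, farSideIndicator, hx] at this
  calc _ < Fintype.card {l : Fin n // l ≠ j₀} := rank_lt_card_width_of_mulVec_eq_zero hw'
        ((M.submatrix_subtype_ne_mulVec_of_eq_zero hwj₀).trans hMw)
    _ = n - 1 := by simp [Fintype.card_subtype_compl]

/-- Let `S` be a nonempty proper set of buses. If every row of `M` is either
a line power-flow measurement row for an edge not cut by `S`, or a bus injection
measurement row for a bus not incident to any cut edge, then deleting any one column of
`M` leaves a matrix of rank strictly less than `n - 1`: the network is unobservable
for any choice of reference bus. -/
theorem stmt9 (m n : ℕ) (G : SimpleGraph (Fin n)) [DecidableRel G.Adj]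
    (b : Fin n → Fin n → ℝ) (hb : ∀ u v : Fin n, G.Adj u v → b u v = b v u)
    (S : Finset (Fin n)) (hS1 : S.Nonempty) (hS2 : S ≠ Finset.univ)
    (M : Matrix (Fin m) (Fin n) ℝ)
    (hrows : ∀ r : Fin m,
      (∃ u v : Fin n, G.Adj u v ∧ ((u ∈ S) ↔ (v ∈ S)) ∧ M r = flowRow n b u v) ∨
      (∃ x : Fin n, (∀ u : Fin n, G.Adj x u → ((x ∈ S) ↔ (u ∈ S))) ∧
        M r = injRow n G b x)) :
    ∀ j₀ : Fin n,
      (M.submatrix (id : Fin m → Fin m) (fun c : {l : Fin n // l ≠ j₀} => c.1)).rank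
        < n - 1 :=
  stmt9_general m n G b S hS1 hS2 M hrows
end

section
/- Let G be a connected simple graph with vertex set V and edge set E, let L ⊆ E be the set of edges carrying a line power-flow measurement and P ⊆ V the set of buses carrying an injection measurement. Let S ⊆ V be nonempty and proper, let A ⊆ E be the set of edges with exactly one endpoint in S, and define the reduced measurement sets L' := L \ A and P' := P minus all vertices incident to an edge of A. Then there exists no spanning tree T of G together with an assignment for T with respect to (L', P'): that is, no injective function f on the edges of T such that every edge e ∈ T with e ∈ L' maps to the flow measurement on e itself, and every edge e ∈ T with e ∉ L' maps to the injection measurement at one of the two endpoints of e lying in P'. -/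
namespace SimpleGraph

theorem Preconnected.exists_adj_mem_notMem {V : Type*} {G : SimpleGraph V} (hG : G.Preconnected)
    {S : Set V} (hS : S.Nonempty) (hS' : S ≠ Set.univ) :
    ∃ x y, G.Adj x y ∧ x ∈ S ∧ y ∉ S := by
  obtain ⟨u, hu⟩ := hS
  obtain ⟨v, hv⟩ := (Set.ne_univ_iff_exists_notMem S).1 hS'
  obtain ⟨d, -, hd, hd'⟩ := (hG u v).some.exists_boundary_dart S hu hv
  exact ⟨d.fst, d.snd, d.adj, hd, hd'⟩

end SimpleGraph

theorem stmt10_general {V : Type*} (G : SimpleGraph V)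
    (L : Set (Sym2 V)) (P : Set V)
    (S : Set V) (hS1 : S.Nonempty) (hS2 : S ≠ Set.univ) :
    let A : Set (Sym2 V) :=
      {e | e ∈ G.edgeSet ∧ ∃ u v : V, e = s(u, v) ∧
        ((u ∈ S ∧ v ∉ S) ∨ (u ∉ S ∧ v ∈ S))}
    let L' : Set (Sym2 V) := L \ A
    let P' : Set V := P \ {x | ∃ e ∈ A, x ∈ e}
    ¬ ∃ (T : SimpleGraph V) (f : Sym2 V → Sym2 V ⊕ V),
        T ≤ G ∧ T.IsTree ∧ Set.InjOn f T.edgeSet ∧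
        ∀ e ∈ T.edgeSet,
          (e ∈ L' → f e = Sum.inl e) ∧
          (e ∉ L' → ∃ x : V, x ∈ e ∧ x ∈ P' ∧ f e = Sum.inr x) := by
  intro A L' P'
  rintro ⟨T, f, hTG, hT, -, hf⟩
  obtain ⟨x, y, hxy, hx, hy⟩ := hT.connected.preconnected.exists_adj_mem_notMem hS1 hS2
  -- The tree edge crossing the cut lost its flow measurement and both of its endpoints lost
  -- their injections, so nothing is left to assign to it.
  have hcut : s(x, y) ∈ A := ⟨hTG hxy, x, y, rfl, Or.inl ⟨hx, hy⟩⟩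
  obtain ⟨z, hz, hzP, -⟩ := (hf s(x, y) hxy).2 fun h => h.2 hcut
  exact hzP.2 ⟨s(x, y), hcut, hz⟩

/-- Let `G` be a connected graph, `L` the edges carrying flow measurements
and `P` the buses carrying injection measurements. Let `S` be a nonempty proper vertex
set, `A` the set of edges of `G` cut by `S`, and let `L' = L \ A`, `P' = P` minus the
vertices incident to an edge of `A` be the reduced measurement sets. Then no spanning
tree `T` of `G` admits an assignment with respect to `(L', P')`: an injective map `f` on
the edges of `T` such that every tree edge `e ∈ L'` maps to its own flow measurement
(`Sum.inl e`) and every tree edge `e ∉ L'` maps to the injection measurement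
(`Sum.inr x`) at one of its endpoints `x` lying in `P'`. -/
theorem stmt10 {V : Type*} (G : SimpleGraph V) (hG : G.Connected)
    (L : Set (Sym2 V)) (hL : L ⊆ G.edgeSet) (P : Set V)
    (S : Set V) (hS1 : S.Nonempty) (hS2 : S ≠ Set.univ) :
    let A : Set (Sym2 V) :=
      {e | e ∈ G.edgeSet ∧ ∃ u v : V, e = s(u, v) ∧
        ((u ∈ S ∧ v ∉ S) ∨ (u ∉ S ∧ v ∈ S))}
    let L' : Set (Sym2 V) := L \ A
    let P' : Set V := P \ {x | ∃ e ∈ A, x ∈ e}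
    ¬ ∃ (T : SimpleGraph V) (f : Sym2 V → Sym2 V ⊕ V),
        T ≤ G ∧ T.IsTree ∧ Set.InjOn f T.edgeSet ∧
        ∀ e ∈ T.edgeSet,
          (e ∈ L' → f e = Sum.inl e) ∧
          (e ∉ L' → ∃ x : V, x ∈ e ∧ x ∈ P' ∧ f e = Sum.inr x) :=
  stmt10_general G L P S hS1 hS2
end

section
/- Let G be a simple graph on vertex set V = {1,…,n} with symmetric susceptances b(u,v) = b(v,u) for adjacent u,v, let L be the set of edges carrying a line power-flow measurement and P the set of buses carrying an injection measurement, and let H be the measurement matrix whose rows are the flow measurement rows for edges in L and the injection measurement rows for buses in P. Suppose the edge {s,t} ∈ L has b(s,t) ≠ 0 and let i be the index of its flow measurement row. Then for every S ⊆ V with s ∈ S and t ∉ S, the indicator vector θ of S satisfies (Hθ)_i = b(s,t) ≠ 0 and card(Hθ) ≤ |{e ∈ L : e is cut by S}| + |{v ∈ P : v is incident to an edge cut by S}|. In particular, the minimum of card(Hθ) over θ with (Hθ)_i ≠ 0 is at most δ(S) + δ_inj(S) with unit meter weights. -/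
open Finset Matrix

/-! The indicator vector of `S` is constant along every edge not cut by `S`. Hence a flow row
annihilates it unless its line is cut, and an injection row unless its bus has a cut incident
edge; since distinct rows carry distinct measurement labels, the support of `Hθ` injects into
the cut lines and the buses incident to cut edges. -/

section
variable {n : ℕ} (b : Fin n → Fin n → ℝ)

theorem flowRow_dotProduct {u v : Fin n} (huv : u ≠ v) (θ : Fin n → ℝ) :
    flowRow n b u v ⬝ᵥ θ = b u v * (θ u - θ v) := by
  have hrow : flowRow n b u v = Pi.single u (b u v) + Pi.single v (-b u v) := by
    ext x
    by_cases hxu : x = u <;> by_cases hxv : x = v <;> simp_all [flowRow]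
  simp only [hrow, add_dotProduct, single_dotProduct, neg_mul]
  ring

theorem injRow_dotProduct (G : SimpleGraph (Fin n)) [DecidableRel G.Adj] (x : Fin n)
    (θ : Fin n → ℝ) :
    injRow n G b x ⬝ᵥ θ = ∑ u ∈ univ.filter (G.Adj x), b x u * (θ x - θ u) := by
  have hrow : injRow n G b x = Pi.single x (∑ u ∈ univ.filter (G.Adj x), b x u)
      - fun y => if G.Adj x y then b x y else 0 := by
    ext y
    by_cases hy : y = x
    · subst hy; simp [injRow]
    · simp [injRow, hy]; split_ifs <;> simp
  have hnbr : (fun y => if G.Adj x y then b x y else 0) ⬝ᵥ θ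
      = ∑ u ∈ univ.filter (G.Adj x), b x u * θ u := by
    simp [dotProduct, ite_mul, sum_filter]
  rw [hrow, sub_dotProduct, single_dotProduct, hnbr, sum_mul, ← sum_sub_distrib]
  simp only [mul_sub]

theorem mem_xor_of_indicator_ne {α : Type*} {S : Finset α} [DecidablePred (· ∈ S)] {u v : α}
    (h : (if u ∈ S then (1 : ℝ) else 0) ≠ if v ∈ S then 1 else 0) :
    (u ∈ S ∧ v ∉ S) ∨ (u ∉ S ∧ v ∈ S) := by
  by_cases hu : u ∈ S <;> by_cases hv : v ∈ S <;> simp_all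

variable (S : Finset (Fin n))

theorem flowRow_dotProduct_indicator_ne_zero {u v : Fin n} (huv : u ≠ v)
    (h : flowRow n b u v ⬝ᵥ (fun x => if x ∈ S then 1 else 0) ≠ 0) :
    (∃ w ∈ s(u, v), w ∈ S) ∧ ∃ w ∈ s(u, v), w ∉ S := by
  rw [flowRow_dotProduct b huv] at h
  rcases mem_xor_of_indicator_ne (sub_ne_zero.mp (right_ne_zero_of_mul h)) with
    ⟨hu, hv⟩ | ⟨hu, hv⟩
  · exact ⟨⟨u, Sym2.mem_mk_left u v, hu⟩, v, Sym2.mem_mk_right u v, hv⟩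
  · exact ⟨⟨v, Sym2.mem_mk_right u v, hv⟩, u, Sym2.mem_mk_left u v, hu⟩

theorem injRow_dotProduct_indicator_ne_zero (G : SimpleGraph (Fin n)) [DecidableRel G.Adj]
    {x : Fin n} (h : injRow n G b x ⬝ᵥ (fun y => if y ∈ S then 1 else 0) ≠ 0) :
    ∃ u, G.Adj x u ∧ ((x ∈ S ∧ u ∉ S) ∨ (x ∉ S ∧ u ∈ S)) := by
  rw [injRow_dotProduct] at h
  obtain ⟨u, hu, hne⟩ := exists_ne_zero_of_sum_ne_zero h
  exact ⟨u, (mem_filter.mp hu).2,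
    mem_xor_of_indicator_ne (sub_ne_zero.mp (right_ne_zero_of_mul hne))⟩

end

open scoped Classical in
theorem stmt12_general (m n : ℕ) (G : SimpleGraph (Fin n)) [DecidableRel G.Adj]
    (b : Fin n → Fin n → ℝ)
    (L : Finset (Sym2 (Fin n))) (hL : ↑L ⊆ G.edgeSet) (P : Finset (Fin n))
    (H : Matrix (Fin m) (Fin n) ℝ)
    (rowMeas : Fin m → Sym2 (Fin n) ⊕ Fin n)
    (hinj : Function.Injective rowMeas)
    (hrow : ∀ r : Fin m,
      (∀ e : Sym2 (Fin n), rowMeas r = Sum.inl e →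
        e ∈ L ∧ ∃ u v : Fin n, e = s(u, v) ∧ H r = flowRow n b u v) ∧
      (∀ x : Fin n, rowMeas r = Sum.inr x → x ∈ P ∧ H r = injRow n G b x))
    (s t : Fin n) (hadj : G.Adj s t) (hbst : b s t ≠ 0)
    (i : Fin m) (hHi : H i = flowRow n b s t)
    (S : Finset (Fin n)) (hs : s ∈ S) (ht : t ∉ S) :
    let θ : Fin n → ℝ := fun x => if x ∈ S then 1 else 0
    let bound : ℕ :=
      (L.filter (fun e => (∃ u ∈ e, u ∈ S) ∧ (∃ u ∈ e, u ∉ S))).card +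
      (P.filter (fun x => ∃ u : Fin n, G.Adj x u ∧
        ((x ∈ S ∧ u ∉ S) ∨ (x ∉ S ∧ u ∈ S)))).card
    H.mulVec θ i = b s t ∧
    (Finset.univ.filter (fun j => H.mulVec θ j ≠ 0)).card ≤ bound ∧
    ∃ θ' : Fin n → ℝ, H.mulVec θ' i ≠ 0 ∧
      (Finset.univ.filter (fun j => H.mulVec θ' j ≠ 0)).card ≤ bound := by
  intro θ bound
  have hval : H.mulVec θ i = b s t := by
    change H i ⬝ᵥ θ = _
    simp [hHi, flowRow_dotProduct b hadj.ne, θ, hs, ht]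
  have hcard : (univ.filter (fun j => H.mulVec θ j ≠ 0)).card ≤ bound := by
    refine (card_le_card_of_injOn rowMeas ?_ hinj.injOn).trans (card_disjSum _ _).le
    intro j hj
    replace hj : H j ⬝ᵥ θ ≠ 0 := (mem_filter.mp hj).2
    rcases hr : rowMeas j with e | x
    · obtain ⟨heL, u, v, rfl, hHj⟩ := (hrow j).1 e hr
      rw [hHj] at hj
      simpa [heL] using flowRow_dotProduct_indicator_ne_zero b S (G.ne_of_adj (hL heL)) hj
    · obtain ⟨hxP, hHj⟩ := (hrow j).2 x hr
      rw [hHj] at hj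
      simpa [hxP] using injRow_dotProduct_indicator_ne_zero b S G hj
  exact ⟨hval, hcard, θ, hval ▸ hbst, hcard⟩

open scoped Classical in
/-- Let `H` be the measurement matrix whose rows are (injectively indexed)
flow measurements on the edges in `L` and injection measurements at the buses in `P`,
and let row `i` be the flow measurement of the edge `{s, t} ∈ L` with `b s t ≠ 0`. Then
for every cut `S` with `s ∈ S` and `t ∉ S`, the indicator vector `θ` of `S` satisfies
`(Hθ) i = b s t ≠ 0` and `card (Hθ)` is at most the number of measured lines cut by `S`
plus the number of measured buses incident to a cut edge. In particular, the minimum of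
`card (Hθ')` over `θ'` with `(Hθ') i ≠ 0` is at most `δ(S) + δ_inj(S)` with unit meter
weights. -/
theorem stmt12 (m n : ℕ) (G : SimpleGraph (Fin n)) [DecidableRel G.Adj]
    (b : Fin n → Fin n → ℝ) (hb : ∀ u v : Fin n, G.Adj u v → b u v = b v u)
    (L : Finset (Sym2 (Fin n))) (hL : ↑L ⊆ G.edgeSet) (P : Finset (Fin n))
    (H : Matrix (Fin m) (Fin n) ℝ)
    (rowMeas : Fin m → Sym2 (Fin n) ⊕ Fin n)
    (hinj : Function.Injective rowMeas)
    (hrow : ∀ r : Fin m,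
      (∀ e : Sym2 (Fin n), rowMeas r = Sum.inl e →
        e ∈ L ∧ ∃ u v : Fin n, e = s(u, v) ∧ H r = flowRow n b u v) ∧
      (∀ x : Fin n, rowMeas r = Sum.inr x → x ∈ P ∧ H r = injRow n G b x))
    (s t : Fin n) (hadj : G.Adj s t) (hbst : b s t ≠ 0)
    (hstL : s(s, t) ∈ L)
    (i : Fin m) (hi : rowMeas i = Sum.inl s(s, t)) (hHi : H i = flowRow n b s t)
    (S : Finset (Fin n)) (hs : s ∈ S) (ht : t ∉ S) :
    let θ : Fin n → ℝ := fun x => if x ∈ S then 1 else 0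
    let bound : ℕ :=
      (L.filter (fun e => (∃ u ∈ e, u ∈ S) ∧ (∃ u ∈ e, u ∉ S))).card +
      (P.filter (fun x => ∃ u : Fin n, G.Adj x u ∧
        ((x ∈ S ∧ u ∉ S) ∨ (x ∉ S ∧ u ∈ S)))).card
    H.mulVec θ i = b s t ∧
    (Finset.univ.filter (fun j => H.mulVec θ j ≠ 0)).card ≤ bound ∧
    ∃ θ' : Fin n → ℝ, H.mulVec θ' i ≠ 0 ∧
      (Finset.univ.filter (fun j => H.mulVec θ' j ≠ 0)).card ≤ bound :=
  stmt12_general m n G b L hL P H rowMeas hinj hrow s t hadj hbst i hHi S hs ht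
end

section
/- Let H be a real m × n matrix, i a row index, and suppose θ* ∈ ℝⁿ satisfies (Hθ*)_i = 1 and card(Hθ*) ≤ card(Hθ) for every θ with (Hθ)_i = 1, and let M ≥ max_j |(Hθ*)_j|. If (θ, y) is feasible for the MILP (8) and Σ_j y_j = card(Hθ*) (i.e., (θ, y) is optimal for the MILP), then θ is optimal for problem (2), i.e., card(Hθ) = card(Hθ*) and (Hθ)_i = 1, and moreover y_j = 1 if and only if (Hθ)_j ≠ 0; in particular y_j = 0 whenever (Hθ)_j = 0. -/
open Matrix

/-- The number of nonzero entries of the residual vector `Hθ`. -/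
noncomputable def residCard {m n : ℕ} (H : Matrix (Fin m) (Fin n) ℝ) (θ : Fin n → ℝ) :
    ℕ := (Finset.univ.filter fun j => H.mulVec θ j ≠ 0).card

/-! A big-M constraint `|x| ≤ M y` with binary `y` forces `y = 1` on the support of the
residual, so `∑ y` bounds the cardinality of that support. If the objective `∑ y` is the
optimal cardinality, the bound is tight, which forces `y` to vanish off the support. -/

theorem eq_one_of_abs_le_mul {x y M : ℝ} (hy : y = 0 ∨ y = 1) (h : |x| ≤ M * y) (hx : x ≠ 0) :
    y = 1 := by
  rcases hy with rfl | rfl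
  · rw [mul_zero, abs_nonpos_iff] at h
    exact absurd h hx
  · rfl

section BinarySum

variable {ι : Type*} {S : Finset ι} {y : ι → ℝ}

theorem sum_eq_card_of_forall_mem_eq_one (h1 : ∀ j ∈ S, y j = 1) :
    ∑ j ∈ S, y j = S.card := by
  rw [Finset.sum_congr rfl h1, Finset.sum_const, nsmul_one]

variable [Fintype ι]

theorem card_le_sum_of_forall_mem_eq_one (hy : ∀ j, 0 ≤ y j) (h1 : ∀ j ∈ S, y j = 1) :
    (S.card : ℝ) ≤ ∑ j, y j := by
  rw [← sum_eq_card_of_forall_mem_eq_one h1]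
  exact Finset.sum_le_sum_of_subset_of_nonneg (Finset.subset_univ S) fun j _ _ => hy j

theorem eq_one_iff_mem_of_sum_le_card (hy : ∀ j, 0 ≤ y j)
    (h1 : ∀ j ∈ S, y j = 1) (hsum : ∑ j, y j ≤ S.card) (j : ι) : y j = 1 ↔ j ∈ S := by
  refine ⟨fun hj => ?_, h1 j⟩
  by_contra hjS
  have hlt : ∑ k ∈ S, y k < ∑ k, y k :=
    Finset.sum_lt_sum_of_subset (Finset.subset_univ S) (Finset.mem_univ j) hjS (by simp [hj])
      fun k _ _ => hy k
  rw [sum_eq_card_of_forall_mem_eq_one h1] at hlt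
  exact hlt.not_ge hsum

end BinarySum

theorem stmt15_general (m n : ℕ) (H : Matrix (Fin m) (Fin n) ℝ) (i : Fin m) (M : ℝ)
    (θs : Fin n → ℝ)
    (hopt : ∀ θ : Fin n → ℝ, H.mulVec θ i = 1 → residCard H θs ≤ residCard H θ)
    (θ : Fin n → ℝ) (y : Fin m → ℝ)
    (hy : ∀ j : Fin m, y j = 0 ∨ y j = 1)
    (hMy : ∀ j : Fin m, |H.mulVec θ j| ≤ M * y j)
    (hθi : H.mulVec θ i = 1)
    (hobj : (∑ j, y j) = (residCard H θs : ℝ)) :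
    residCard H θ = residCard H θs ∧ H.mulVec θ i = 1 ∧
    (∀ j : Fin m, y j = 1 ↔ H.mulVec θ j ≠ 0) := by
  set S := Finset.univ.filter fun j => H.mulVec θ j ≠ 0
  have hS : ∀ j ∈ S, y j = 1 := fun j hj =>
    eq_one_of_abs_le_mul (hy j) (hMy j) (Finset.mem_filter.1 hj).2
  have hy_nonneg : ∀ j, 0 ≤ y j := fun j => by rcases hy j with h | h <;> simp [h]
  have hcard : residCard H θ = residCard H θs := by
    refine le_antisymm ?_ (hopt θ hθi)
    exact_mod_cast (card_le_sum_of_forall_mem_eq_one hy_nonneg hS).trans hobj.le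
  have hsum : ∑ j, y j ≤ S.card := by
    rw [hobj, ← hcard]
    rfl
  refine ⟨hcard, hθi, fun j => ?_⟩
  simpa [S] using eq_one_iff_mem_of_sum_le_card hy_nonneg hS hsum j

/-- Suppose `θ*` is optimal for problem (2) and `M ≥ max_j |(Hθ*)_j|`. If
`(θ, y)` is feasible for the MILP (8) with objective value `∑ j, y j = card (Hθ*)`
(i.e. `(θ, y)` is optimal for the MILP), then `θ` is optimal for problem (2):
`card (Hθ) = card (Hθ*)` and `(Hθ)_i = 1`; moreover `y` is the exact indicator of the
residual support: `y_j = 1` iff `(Hθ)_j ≠ 0` (in particular `y_j = 0` whenever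
`(Hθ)_j = 0`). -/
theorem stmt15 (m n : ℕ) (H : Matrix (Fin m) (Fin n) ℝ) (i : Fin m) (M : ℝ)
    (θs : Fin n → ℝ)
    (hfeas : H.mulVec θs i = 1)
    (hopt : ∀ θ : Fin n → ℝ, H.mulVec θ i = 1 → residCard H θs ≤ residCard H θ)
    (hM : ∀ j : Fin m, |H.mulVec θs j| ≤ M)
    (θ : Fin n → ℝ) (y : Fin m → ℝ)
    (hy : ∀ j : Fin m, y j = 0 ∨ y j = 1)
    (hMy : ∀ j : Fin m, |H.mulVec θ j| ≤ M * y j)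
    (hθi : H.mulVec θ i = 1)
    (hobj : (∑ j, y j) = (residCard H θs : ℝ)) :
    residCard H θ = residCard H θs ∧ H.mulVec θ i = 1 ∧
    (∀ j : Fin m, y j = 1 ↔ H.mulVec θ j ≠ 0) :=
  stmt15_general m n H i M θs hopt θ y hy hMy hθi hobj
end
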